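/- Let n ≥ 2 and let α, β ∈ ℂ be nonzero, and regard f = x₀⁴ + α·x₁⁴ + β·(x₀+x₁)⁴ as a homogeneous quartic in ℂ[x₀,x₁,…,xₙ]. Then a homogeneous quadratic g ∈ ℂ[y₀,y₁,…,yₙ] satisfies g(∂)f = 0 if and only if g lies in the ℂ-linear span of the quadratic monomials y_i·y_j with 0 ≤ i ≤ j ≤ n and j ≥ 2; equivalently, the space of quadratic annihilators of f equals the degree-2 part of the ideal (y₂,…,yₙ). -/

import Mathlib

open MvPolynomial

/-- The differential action of `g ∈ ℂ[y₀,…,y_{n-1}]` on `f ∈ ℂ[x₀,…,x_{n-1}]`: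
`g(∂₀,…,∂_{n-1}) f`, obtained by substituting the partial derivative `∂/∂xᵢ` for `yᵢ`. -/
noncomputable def diffOp {n : ℕ} (g f : MvPolynomial (Fin n) ℂ) : MvPolynomial (Fin n) ℂ :=
  g.support.sum fun m =>
    g.coeff m •
      ((List.ofFn fun i : Fin n =>
        ((MvPolynomial.pderiv i).toLinearMap ^ (m i) :
          Module.End ℂ (MvPolynomial (Fin n) ℂ))).prod f)

/-!
Since `f` involves only `x₀` and `x₁`, every `yᵢ yⱼ` with `j ≥ 2` annihilates it, and `g ↦ g(∂) f`
is linear. Modulo the span of these monomials, a quadratic form `g` is `a y₀² + b y₀ y₁ + c y₁²`,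
which sends `f` to `12 (a x₀² + β (a + b + c) (x₀ + x₁)² + α c x₁²)`. The quadrics `x₀²`,
`(x₀ + x₁)²`, `x₁²` are linearly independent, so `a = α c = β (a + b + c) = 0`, and `α, β ≠ 0`
forces `a = b = c = 0`.
-/

section ListProd
variable {M : Type*} [Monoid M]

theorem List.prod_ofFn_eq_of_forall_ne_eq_one {N : ℕ} (v : Fin N → M) (i : Fin N)
    (hv : ∀ k, k ≠ i → v k = 1) : (List.ofFn v).prod = v i := by
  induction N with
  | zero => exact i.elim0
  | succ N ih =>
    rw [List.ofFn_succ, List.prod_cons]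
    cases i using Fin.cases with
    | zero =>
      rw [List.prod_eq_one, mul_one]
      simp only [List.mem_ofFn, forall_exists_index]
      rintro _ k rfl
      exact hv _ k.succ_ne_zero
    | succ i =>
      rw [hv 0 (Fin.succ_ne_zero i).symm, one_mul]
      exact ih _ i fun k hk => hv _ (Fin.succ_injective _ |>.ne hk)

theorem List.prod_ofFn_eq_mul_of_forall_ne_eq_one {N : ℕ} (v : Fin N → M) {i j : Fin N}
    (hij : i < j) (hv : ∀ k, k ≠ i → k ≠ j → v k = 1) : (List.ofFn v).prod = v i * v j := by
  induction N with
  | zero => exact i.elim0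
  | succ N ih =>
    rw [List.ofFn_succ, List.prod_cons]
    cases j using Fin.cases with
    | zero => exact absurd hij (Fin.not_lt_zero i)
    | succ j =>
      cases i using Fin.cases with
      | zero =>
        rw [prod_ofFn_eq_of_forall_ne_eq_one _ j fun k hk =>
          hv _ k.succ_ne_zero (Fin.succ_injective _ |>.ne hk)]
      | succ i =>
        rw [hv 0 (Fin.succ_ne_zero i).symm (Fin.succ_ne_zero j).symm, one_mul]
        exact ih _ (Fin.succ_lt_succ_iff.mp hij) fun k hki hkj =>
          hv _ (Fin.succ_injective _ |>.ne hki) (Fin.succ_injective _ |>.ne hkj)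

end ListProd

section QuadraticMonomials
variable {σ R : Type*} [CommSemiring R]

theorem MvPolynomial.X_mul_X_eq_monomial (i j : σ) :
    (X i * X j : MvPolynomial σ R) = monomial (Finsupp.single i 1 + Finsupp.single j 1) 1 := by
  rw [X, X, monomial_mul, one_mul]

variable [LinearOrder σ]

theorem Finsupp.exists_eq_single_add_single_of_degree_eq_two {m : σ →₀ ℕ} (hm : m.degree = 2) :
    ∃ i j, i ≤ j ∧ m = Finsupp.single i 1 + Finsupp.single j 1 := by
  classical
  obtain ⟨x, y, hxy⟩ := Multiset.card_eq_two.mp (m.card_toMultiset.trans hm)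
  have hm' : m = Finsupp.single x 1 + Finsupp.single y 1 := by
    rw [← Multiset.toFinsupp_eq_iff.mpr hxy.symm, Multiset.insert_eq_cons,
      ← Multiset.singleton_add, Multiset.toFinsupp_add, Multiset.toFinsupp_singleton,
      Multiset.toFinsupp_singleton]
  rcases le_total x y with h | h
  · exact ⟨x, y, h, hm'⟩
  · exact ⟨y, x, h, hm'.trans (add_comm _ _)⟩

theorem MvPolynomial.coeff_single_add_single_X_mul_X {i j k l : σ} (hij : i ≤ j) (hkl : k ≤ l) :
    coeff (Finsupp.single i 1 + Finsupp.single j 1) (X k * X l : MvPolynomial σ R) =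
      if k = i ∧ l = j then 1 else 0 := by
  classical
  rw [X_mul_X_eq_monomial, coeff_monomial]
  refine if_congr ?_ rfl rfl
  rw [Finsupp.single_add_single_eq_single_add_single one_ne_zero one_ne_zero]
  constructor
  · rintro (h | ⟨-, rfl, rfl⟩ | ⟨h, -⟩)
    · exact h
    · exact ⟨le_antisymm hkl hij, le_antisymm hij hkl⟩
    · exact absurd h (by norm_num)
  · exact Or.inl

theorem MvPolynomial.mem_span_X_mul_X_of_isHomogeneous_two (P : σ → σ → Prop)
    {g : MvPolynomial σ R} (hg : g.IsHomogeneous 2)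
    (hcoeff : ∀ i j, i ≤ j → ¬ P i j → coeff (Finsupp.single i 1 + Finsupp.single j 1) g = 0) :
    g ∈ Submodule.span R {p | ∃ i j, i ≤ j ∧ P i j ∧ p = X i * X j} := by
  rw [← support_sum_monomial_coeff g]
  refine Submodule.sum_mem _ fun m hm => ?_
  have hdeg : m.degree = 2 := by
    rw [Finsupp.degree_eq_weight_one]; exact hg (mem_support_iff.mp hm)
  obtain ⟨i, j, hij, rfl⟩ := Finsupp.exists_eq_single_add_single_of_degree_eq_two hdeg
  by_cases hP : P i j
  · have hmonomial (c : R) :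
        monomial (Finsupp.single i 1 + Finsupp.single j 1) c = c • (X i * X j) := by
      rw [X_mul_X_eq_monomial, smul_monomial, smul_eq_mul, mul_one]
    rw [hmonomial]
    exact Submodule.smul_mem _ _ (Submodule.subset_span ⟨i, j, hij, hP, rfl⟩)
  · rw [hcoeff i j hij hP, map_zero]
    exact Submodule.zero_mem _

end QuadraticMonomials

section DiffOp
variable {N : ℕ}

noncomputable def pderivMonomial (m : Fin N →₀ ℕ) : Module.End ℂ (MvPolynomial (Fin N) ℂ) :=
  (List.ofFn fun i : Fin N =>
    ((pderiv i).toLinearMap : Module.End ℂ (MvPolynomial (Fin N) ℂ)) ^ m i).prod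

theorem pderivMonomial_single_add_single {i j : Fin N} (hij : i ≤ j) (f : MvPolynomial (Fin N) ℂ) :
    pderivMonomial (Finsupp.single i 1 + Finsupp.single j 1) f = pderiv i (pderiv j f) := by
  rcases hij.eq_or_lt with rfl | hlt
  · rw [pderivMonomial, List.prod_ofFn_eq_of_forall_ne_eq_one _ i fun k hk => by simp [hk]]
    simp [pow_two]
  · rw [pderivMonomial, List.prod_ofFn_eq_mul_of_forall_ne_eq_one _ hlt fun k hki hkj => by
      simp [hki, hkj]]
    simp [hlt.ne, hlt.ne']

noncomputable def diffOpLinear (f : MvPolynomial (Fin N) ℂ) :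
    MvPolynomial (Fin N) ℂ →ₗ[ℂ] MvPolynomial (Fin N) ℂ :=
  Finsupp.linearCombination ℂ (fun m => pderivMonomial m f) ∘ₗ
    (AddMonoidAlgebra.coeffLinearEquiv ℂ).toLinearMap

theorem diffOpLinear_apply (f g : MvPolynomial (Fin N) ℂ) : diffOpLinear f g = diffOp g f :=
  rfl

theorem diffOpLinear_monomial (f : MvPolynomial (Fin N) ℂ) (m : Fin N →₀ ℕ) (c : ℂ) :
    diffOpLinear f (monomial m c) = c • pderivMonomial m f :=
  Finsupp.linearCombination_single ℂ c m

theorem diffOp_X_mul_X {i j : Fin N} (hij : i ≤ j) (f : MvPolynomial (Fin N) ℂ) :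
    diffOp (X i * X j) f = pderiv i (pderiv j f) := by
  rw [← diffOpLinear_apply, X_mul_X_eq_monomial, diffOpLinear_monomial, one_smul,
    pderivMonomial_single_add_single hij]

end DiffOp

section BinaryQuartic
variable {σ R : Type*}

noncomputable def binaryQuartic [CommSemiring R] (i j : σ) (α β : R) : MvPolynomial σ R :=
  X i ^ 4 + C α * X j ^ 4 + C β * (X i + X j) ^ 4

variable [CommRing R] {i j : σ} {α β : R}

theorem pderiv_binaryQuartic_of_ne {k : σ} (hki : k ≠ i) (hkj : k ≠ j) :
    pderiv k (binaryQuartic i j α β) = 0 := by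
  simp [binaryQuartic, pderiv_X_of_ne hki.symm, pderiv_X_of_ne hkj.symm]

theorem smul_pderiv_pderiv_binaryQuartic (hij : i ≠ j) (a b c : R) :
    a • pderiv i (pderiv i (binaryQuartic i j α β)) +
        b • pderiv i (pderiv j (binaryQuartic i j α β)) +
        c • pderiv j (pderiv j (binaryQuartic i j α β)) =
      12 * (C a * X i ^ 2 + C (β * (a + b + c)) * (X i + X j) ^ 2 + C (α * c) * X j ^ 2) := by
  simp [binaryQuartic, pderiv_X_of_ne hij, pderiv_X_of_ne hij.symm, smul_eq_C_mul,
    Derivation.map_natCast, -Nat.cast_ofNat]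
  ring

theorem eq_zero_of_C_mul_sq_add_C_mul_sq_add_C_mul_sq [IsDomain R] [CharZero R] (hij : i ≠ j)
    {a b c : R}
    (h : C a * X i ^ 2 + C b * (X i + X j) ^ 2 + C c * X j ^ 2 = (0 : MvPolynomial σ R)) :
    a = 0 ∧ b = 0 ∧ c = 0 := by
  classical
  have heval (x y : R) : a * x ^ 2 + b * (x + y) ^ 2 + c * y ^ 2 = 0 := by
    simpa [hij.symm] using congrArg (eval fun k => if k = i then x else if k = j then y else 0) h
  have h10 := heval 1 0
  have h01 := heval 0 1
  have h11 := heval 1 1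
  have hb : b = 0 := by
    have : (2 : R) * b = 0 := by linear_combination h11 - h10 - h01
    simpa using this
  refine ⟨?_, hb, ?_⟩
  · linear_combination h10 - hb
  · linear_combination h01 - hb

theorem eq_zero_of_smul_pderiv_pderiv_binaryQuartic_eq_zero [IsDomain R] [CharZero R]
    (hij : i ≠ j) (hα : α ≠ 0) (hβ : β ≠ 0) {a b c : R}
    (h : a • pderiv i (pderiv i (binaryQuartic i j α β)) +
        b • pderiv i (pderiv j (binaryQuartic i j α β)) +
        c • pderiv j (pderiv j (binaryQuartic i j α β)) = 0) :
    a = 0 ∧ b = 0 ∧ c = 0 := by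
  rw [smul_pderiv_pderiv_binaryQuartic hij, mul_eq_zero] at h
  obtain ⟨ha, hsum, hc⟩ :=
    eq_zero_of_C_mul_sq_add_C_mul_sq_add_C_mul_sq hij (h.resolve_left (by norm_num))
  have hc : c = 0 := (mul_eq_zero.mp hc).resolve_left hα
  have hsum : a + b + c = 0 := (mul_eq_zero.mp hsum).resolve_left hβ
  exact ⟨ha, by linear_combination hsum - ha - hc, hc⟩

end BinaryQuartic

section FinSucc
variable {n : ℕ}

theorem Fin.val_one_of_one_le (hn : 1 ≤ n) : ((1 : Fin (n + 1)) : ℕ) = 1 :=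
  (Fin.val_one' _).trans (Nat.mod_eq_of_lt (by omega))

theorem sub_mem_span_X_mul_X_of_isHomogeneous_two {R : Type*} [CommRing R] (hn : 1 ≤ n)
    {g : MvPolynomial (Fin (n + 1)) R} (hg : g.IsHomogeneous 2) :
    g - (coeff (Finsupp.single 0 1 + Finsupp.single 0 1) g • (X 0 * X 0) +
        coeff (Finsupp.single 0 1 + Finsupp.single 1 1) g • (X 0 * X 1) +
        coeff (Finsupp.single 1 1 + Finsupp.single 1 1) g • (X 1 * X 1)) ∈
      Submodule.span R {p | ∃ i j : Fin (n + 1), i ≤ j ∧ 2 ≤ (j : ℕ) ∧ p = X i * X j} := by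
  have hX (i j : Fin (n + 1)) : X i * X j ∈ homogeneousSubmodule (Fin (n + 1)) R 2 :=
    (isHomogeneous_X R i).mul (isHomogeneous_X R j)
  have hle_one (k : Fin (n + 1)) (hk : (k : ℕ) ≤ 1) : k = 0 ∨ k = 1 :=
    (Nat.le_one_iff_eq_zero_or_eq_one.mp hk).imp Fin.ext
      fun h => Fin.ext (h.trans (Fin.val_one_of_one_le hn).symm)
  have hn0 : n ≠ 0 := by omega
  apply mem_span_X_mul_X_of_isHomogeneous_two
  · exact hg.sub <| add_mem (add_mem (Submodule.smul_mem _ _ (hX 0 0))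
      (Submodule.smul_mem _ _ (hX 0 1))) (Submodule.smul_mem _ _ (hX 1 1))
  intro i j hij hj
  have hj1 : (j : ℕ) ≤ 1 := by omega
  obtain rfl | rfl := hle_one j hj1 <;>
    obtain rfl | rfl := hle_one i ((Fin.le_iff_val_le_val.mp hij).trans hj1) <;>
    simp_all [coeff_single_add_single_X_mul_X]

theorem span_X_mul_X_le_ker_diffOpLinear_binaryQuartic (α β : ℂ) :
    Submodule.span ℂ {p : MvPolynomial (Fin (n + 1)) ℂ |
        ∃ i j : Fin (n + 1), i ≤ j ∧ 2 ≤ (j : ℕ) ∧ p = X i * X j} ≤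
      LinearMap.ker (diffOpLinear (binaryQuartic 0 1 α β)) := by
  rw [Submodule.span_le]
  rintro _ ⟨i, j, hij, hj, rfl⟩
  have hj0 : j ≠ 0 := Fin.ne_of_val_ne (by rw [Fin.val_zero]; omega)
  have hj1 : j ≠ 1 := Fin.ne_of_val_ne <| by
    have := Nat.mod_le 1 (n + 1)
    rw [Fin.val_one']; omega
  rw [SetLike.mem_coe, LinearMap.mem_ker, diffOpLinear_apply, diffOp_X_mul_X hij,
    pderiv_binaryQuartic_of_ne hj0 hj1, map_zero]

end FinSucc

theorem stmt_16 (n : ℕ) (hn : 2 ≤ n) (α β : ℂ) (hα : α ≠ 0) (hβ : β ≠ 0)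
    (f : MvPolynomial (Fin (n + 1)) ℂ)
    (hf : f = X 0 ^ 4 + C α * X 1 ^ 4 + C β * (X 0 + X 1) ^ 4)
    (g : MvPolynomial (Fin (n + 1)) ℂ) (hg : g.IsHomogeneous 2) :
    diffOp g f = 0 ↔
      g ∈ Submodule.span ℂ
        {p : MvPolynomial (Fin (n + 1)) ℂ |
          ∃ i j : Fin (n + 1), i ≤ j ∧ 2 ≤ (j : ℕ) ∧ p = X i * X j} := by
  obtain rfl : f = binaryQuartic 0 1 α β := hf
  have hker := span_X_mul_X_le_ker_diffOpLinear_binaryQuartic (n := n) α β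
  refine ⟨fun hD => ?_, fun hmem => hker hmem⟩
  have hsub := sub_mem_span_X_mul_X_of_isHomogeneous_two (n := n) (by omega) hg
  set a := coeff (Finsupp.single 0 1 + Finsupp.single 0 1) g
  set b := coeff (Finsupp.single 0 1 + Finsupp.single 1 1) g
  set c := coeff (Finsupp.single 1 1 + Finsupp.single 1 1) g
  have hq : diffOpLinear (binaryQuartic (0 : Fin (n + 1)) 1 α β)
      (a • (X 0 * X 0) + b • (X 0 * X 1) + c • (X 1 * X 1)) = 0 := by
    have hsub_ker := hker hsub
    rwa [LinearMap.mem_ker, map_sub, diffOpLinear_apply, hD, zero_sub, neg_eq_zero] at hsub_ker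
  simp only [map_add, map_smul, diffOpLinear_apply, diffOp_X_mul_X le_rfl,
    diffOp_X_mul_X (Fin.zero_le _)] at hq
  have h01 : (0 : Fin (n + 1)) ≠ 1 :=
    Fin.ne_of_val_ne (by rw [Fin.val_one_of_one_le (by omega)]; simp)
  obtain ⟨ha, hb, hc⟩ := eq_zero_of_smul_pderiv_pderiv_binaryQuartic_eq_zero h01 hα hβ hq
  simpa [ha, hb, hc] using hsub
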